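/- Let M = ⊕_{ℓ∈ℤ} M_ℓ be a ℤ-graded ℚ(q)-vector space, and let c, b ∈ ℤ. Suppose X, Y, F, Q are linear operators on M such that X and Y raise degree by 2, F lowers degree by 2, Q preserves degree, and: (i) X·Y = q²·Y·X; (ii) for all ℓ and all v ∈ M_ℓ, (Y·F - F·Y)v = [ℓ + bc]·v; (iii) for all ℓ and all v ∈ M_ℓ, (X·F - F·X)v = q^{(b+1)c}·q^ℓ·(Qv). Then for all ℓ and all v ∈ M_ℓ, q^c·(Q·Y - Y·Q)v = [2]·Xv. -/

import Mathlib

noncomputable def q : RatFunc ℚ := RatFunc.X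

/-- The quantum integer [n] = (q^n - q^{-n})/(q - q^{-1}) in ℚ(q). -/
noncomputable def qint (n : ℤ) : RatFunc ℚ := (q ^ n - q ^ (-n)) / (q - q⁻¹)

/-!
Write `n = ℓ + bc`. Applying `[X, F]` to `Y v` and `Y` to `[X, F] v` produces `Q Y v` and `Y Q v`
with scalars differing by `q²`; moving `X` past `Y` with `XY = q² YX` turns the difference into
`q² [Y, F] X v - X [Y, F] v = (q² [n + 2] - [n]) X v`, and `q² [n + 2] - [n] = q^(n+2) [2]`.
-/

lemma q_ne_zero : q ≠ 0 := RatFunc.X_ne_zero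

lemma q_sub_q_inv_ne_zero : q - q⁻¹ ≠ 0 := by
  intro h
  have hq2 : q ^ 2 = 1 := by
    field_simp [q_ne_zero] at h
    linear_combination h
  have hX2 : (Polynomial.X : Polynomial ℚ) ^ 2 = 1 := by
    apply RatFunc.algebraMap_injective ℚ
    simpa [RatFunc.algebraMap_X, q] using hq2
  simpa using congrArg Polynomial.natDegree hX2

lemma q_sq_mul_qint_add_two_sub_qint (n : ℤ) :
    q ^ (2 : ℤ) * qint (n + 2) - qint n = q ^ (n + 2) * (q + q⁻¹) := by
  have hq := q_ne_zero
  rw [qint, qint, mul_div_assoc', ← sub_div, div_eq_iff q_sub_q_inv_ne_zero, neg_add,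
    zpow_add₀ hq, zpow_add₀ hq, zpow_neg, zpow_neg, zpow_two]
  field_simp
  ring

lemma commutator_mul_sub_smul_mul_commutator {R M : Type*} [CommRing R] [AddCommGroup M]
    [Module R M] (X Y F : M →ₗ[R] M) (s : R) (hXY : ∀ v, X (Y v) = s • Y (X v)) (v : M) :
    X (F (Y v)) - F (X (Y v)) - s • Y (X (F v) - F (X v)) =
      s • (Y (F (X v)) - F (Y (X v))) - X (Y (F v) - F (Y v)) := by
  simp only [map_sub, map_smul, hXY, smul_sub]
  abel

theorem case_a_zero_i_eq_j_general (c b : ℤ) {M : Type*} [AddCommGroup M] [Module (RatFunc ℚ) M]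
    (Mℓ : ℤ → Submodule (RatFunc ℚ) M)
    (X Y F Q : M →ₗ[RatFunc ℚ] M)
    (hX : ∀ (ℓ : ℤ) (v : M), v ∈ Mℓ ℓ → X v ∈ Mℓ (ℓ + 2))
    (hY : ∀ (ℓ : ℤ) (v : M), v ∈ Mℓ ℓ → Y v ∈ Mℓ (ℓ + 2))
    (hXY : ∀ v : M, X (Y v) = (q ^ (2 : ℤ)) • Y (X v))
    (hYF : ∀ (ℓ : ℤ) (v : M), v ∈ Mℓ ℓ → Y (F v) - F (Y v) = qint (ℓ + b * c) • v)
    (hXF : ∀ (ℓ : ℤ) (v : M), v ∈ Mℓ ℓ →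
      X (F v) - F (X v) = (q ^ ((b + 1) * c) * q ^ ℓ) • Q v) :
    ∀ (ℓ : ℤ) (v : M), v ∈ Mℓ ℓ →
      (q ^ c) • (Q (Y v) - Y (Q v)) = (q + q⁻¹) • X v := by
  intro ℓ v hv
  have hq := q_ne_zero
  have key := commutator_mul_sub_smul_mul_commutator X Y F _ hXY v
  rw [hXF (ℓ + 2) _ (hY ℓ v hv), hXF ℓ v hv, hYF (ℓ + 2) _ (hX ℓ v hv), hYF ℓ v hv,
    show ℓ + 2 + b * c = ℓ + b * c + 2 by ring] at key
  apply smul_right_injective M (zpow_ne_zero (ℓ + b * c + 2) hq)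
  calc q ^ (ℓ + b * c + 2) • q ^ c • (Q (Y v) - Y (Q v))
      = (q ^ ((b + 1) * c) * q ^ (ℓ + 2)) • Q (Y v)
          - q ^ (2 : ℤ) • Y ((q ^ ((b + 1) * c) * q ^ ℓ) • Q v) := by
        simp only [map_smul, smul_smul, smul_sub, ← zpow_add₀ hq]
        ring_nf
    _ = q ^ (2 : ℤ) • qint (ℓ + b * c + 2) • X v - X (qint (ℓ + b * c) • v) := key
    _ = q ^ (ℓ + b * c + 2) • (q + q⁻¹) • X v := by
        rw [map_smul, smul_smul, ← sub_smul, q_sq_mul_qint_add_two_sub_qint, mul_smul]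

theorem case_a_zero_i_eq_j (c b : ℤ) {M : Type*} [AddCommGroup M] [Module (RatFunc ℚ) M]
    (Mℓ : ℤ → Submodule (RatFunc ℚ) M)
    (hInt : DirectSum.IsInternal Mℓ)
    (X Y F Q : M →ₗ[RatFunc ℚ] M)
    (hX : ∀ (ℓ : ℤ) (v : M), v ∈ Mℓ ℓ → X v ∈ Mℓ (ℓ + 2))
    (hY : ∀ (ℓ : ℤ) (v : M), v ∈ Mℓ ℓ → Y v ∈ Mℓ (ℓ + 2))
    (hF : ∀ (ℓ : ℤ) (v : M), v ∈ Mℓ ℓ → F v ∈ Mℓ (ℓ - 2))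
    (hQ : ∀ (ℓ : ℤ) (v : M), v ∈ Mℓ ℓ → Q v ∈ Mℓ ℓ)
    (hXY : ∀ v : M, X (Y v) = (q ^ (2 : ℤ)) • Y (X v))
    (hYF : ∀ (ℓ : ℤ) (v : M), v ∈ Mℓ ℓ → Y (F v) - F (Y v) = qint (ℓ + b * c) • v)
    (hXF : ∀ (ℓ : ℤ) (v : M), v ∈ Mℓ ℓ →
      X (F v) - F (X v) = (q ^ ((b + 1) * c) * q ^ ℓ) • Q v) :
    ∀ (ℓ : ℤ) (v : M), v ∈ Mℓ ℓ →
      (q ^ c) • (Q (Y v) - Y (Q v)) = (q + q⁻¹) • X v :=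
  case_a_zero_i_eq_j_general c b Mℓ X Y F Q hX hY hXY hYF hXF
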